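/- Let Φ be a Horn formula, ρ ⊆ V_Φ a set of variables assigned true, and let S ⊇ ρ be the set of variables set to true by unit propagation from Φ⁺|_ρ together with ρ. If no negative clause c ∈ Φ⁻ has all of its variables contained in S, then the complete interpretation that assigns true to every variable in S and false to every variable in V_Φ \ S is a model of Φ; in particular Φ|_ρ is satisfiable. -/

import Mathlib

abbrev Lit (V : Type) := V × Bool
abbrev Clause (V : Type) := Finset (Lit V)
abbrev CnfForm (V : Type) := Finset (Clause V)

variable {V : Type} [DecidableEq V]

/-- Restriction Φ|_ρ : remove clauses containing a literal of ρ, and delete from the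
remaining clauses every literal whose complement is in ρ. -/
def restrict (Φ : CnfForm V) (ρ : Finset (Lit V)) : CnfForm V :=
  (Φ.filter fun c => ∀ l ∈ ρ, l ∉ c).image fun c => c.filter fun l => (l.1, !l.2) ∉ ρ

/-- Unit propagation derives the literal `l` from `Φ` : repeatedly assigning the
literals of unit clauses true and simplifying eventually produces the unit clause
`{l}` or the empty clause. -/
inductive UPDerives : CnfForm V → Lit V → Prop
  | unit {Φ : CnfForm V} {l : Lit V} : ({l} : Clause V) ∈ Φ → UPDerives Φ l
  | bot {Φ : CnfForm V} {l : Lit V} : (∅ : Clause V) ∈ Φ → UPDerives Φ l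
  | step {Φ : CnfForm V} {l : Lit V} (m : Lit V) : ({m} : Clause V) ∈ Φ →
      UPDerives (restrict Φ {m}) l → UPDerives Φ l

/-- Unit propagation derives the empty clause from `Φ`, i.e. `Φ* = ⊥`. -/
inductive UPEmpty : CnfForm V → Prop
  | bot {Φ : CnfForm V} : (∅ : Clause V) ∈ Φ → UPEmpty Φ
  | step {Φ : CnfForm V} (m : Lit V) : ({m} : Clause V) ∈ Φ → UPEmpty (restrict Φ {m}) → UPEmpty Φ

/-- `UPReach Φ Ψ` : the formula `Ψ` is obtained from `Φ` by a sequence of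
unit-propagation steps. -/
inductive UPReach : CnfForm V → CnfForm V → Prop
  | refl (Φ : CnfForm V) : UPReach Φ Φ
  | step {Φ Ψ : CnfForm V} (m : Lit V) : UPReach Φ Ψ → ({m} : Clause V) ∈ Ψ →
      UPReach Φ (restrict Ψ {m})

/-- The set of variables occurring in `Φ`. -/
def varsOf (Φ : CnfForm V) : Finset V := Φ.biUnion fun c => c.image Prod.fst

/-- A Horn formula: every clause contains at most one positive literal. -/
def IsHorn (Φ : CnfForm V) : Prop := ∀ c ∈ Φ, (c.filter fun l => l.2 = true).card ≤ 1

/-- `Φ⁻` : the negative clauses of `Φ` (no positive literal). -/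
def negClauses (Φ : CnfForm V) : CnfForm V := Φ.filter fun c => ∀ l ∈ c, l.2 = false

/-- `Φ⁺` : the clauses of `Φ` with exactly one positive literal. -/
def posPart (Φ : CnfForm V) : CnfForm V :=
  Φ.filter fun c => (c.filter fun l => l.2 = true).card = 1

/-!
Unit propagation from `Φ⁺|_ρ` sets to true exactly the least set of variables that contains `ρ`
and is closed under the clauses of `Φ⁺`, read as implications `x₁ ∧ … ∧ xₖ → y`. Every formula
it reaches is `Φ⁺|_T` for a set `T` of propagated variables, and a unit clause of `Φ⁺|_T` is the
head of a clause whose body lies in `T`: so propagation never leaves a closed set containing `ρ`,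
and a maximal reachable `T` has no unit clause left, i.e. is closed. The interpretation that is
true exactly on a closed set satisfies every Horn clause with a positive literal, and every
negative clause unless one lies entirely inside the set.
-/

def posLits (T : Finset V) : Finset (Lit V) := T.image fun v => (v, true)

@[simp]
lemma mem_posLits {T : Finset V} {l : Lit V} : l ∈ posLits T ↔ l.1 ∈ T ∧ l.2 = true := by
  obtain ⟨v, b⟩ := l
  simp [posLits, eq_comm]

lemma fst_mem_varsOf {Φ : CnfForm V} {c : Clause V} {l : Lit V} (hc : c ∈ Φ) (hl : l ∈ c) :
    l.1 ∈ varsOf Φ :=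
  Finset.mem_biUnion.2 ⟨c, hc, Finset.mem_image_of_mem _ hl⟩

lemma restrict_restrict {Φ : CnfForm V} {A B : Finset (Lit V)}
    (hAB : ∀ l ∈ B, (l.1, !l.2) ∉ A) :
    restrict (restrict Φ A) B = restrict Φ (A ∪ B) := by
  have filter_filter_eq (c : Clause V) :
      ((c.filter fun l => (l.1, !l.2) ∉ A).filter fun l => (l.1, !l.2) ∉ B) =
        c.filter fun l => (l.1, !l.2) ∉ A ∪ B := by
    simp only [Finset.filter_filter, Finset.mem_union, not_or]
  ext c
  simp only [restrict, Finset.mem_image, Finset.mem_filter]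
  constructor
  · rintro ⟨_, ⟨⟨c, ⟨hc, hcA⟩, rfl⟩, hcB⟩, rfl⟩
    refine ⟨c, ⟨hc, fun l hl hlc => ?_⟩, (filter_filter_eq c).symm⟩
    rcases Finset.mem_union.mp hl with hl | hl
    · exact hcA l hl hlc
    · exact hcB l hl (Finset.mem_filter.mpr ⟨hlc, hAB l hl⟩)
  · rintro ⟨c, ⟨hc, hcAB⟩, rfl⟩
    refine ⟨_, ⟨⟨c, ⟨hc, fun l hl => hcAB l (Finset.mem_union_left _ hl)⟩, rfl⟩,
      fun l hl hlc => hcAB l (Finset.mem_union_right _ hl) (Finset.mem_filter.mp hlc).1⟩,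
      filter_filter_eq c⟩

lemma restrict_restrict_posLits (Φ : CnfForm V) (T : Finset V) (x : V) :
    restrict (restrict Φ (posLits T)) {(x, true)} = restrict Φ (posLits (insert x T)) := by
  rw [restrict_restrict (by simp)]
  congr 1
  ext l
  simp [Prod.ext_iff, or_and_right]

omit [DecidableEq V] in
lemma exists_pos_of_mem_posPart {Φ : CnfForm V} {c : Clause V} (hc : c ∈ posPart Φ) :
    ∃ p ∈ c, p.2 = true := by
  obtain ⟨p, hp⟩ := Finset.card_pos.mp ((Finset.mem_filter.mp hc).2 ▸ Nat.one_pos)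
  exact ⟨p, Finset.mem_filter.mp hp⟩

omit [DecidableEq V] in
lemma eq_of_mem_posPart {Φ : CnfForm V} {c : Clause V} (hc : c ∈ posPart Φ) {p q : Lit V}
    (hp : p ∈ c) (hp2 : p.2 = true) (hq : q ∈ c) (hq2 : q.2 = true) : p = q :=
  Finset.card_le_one.mp (Finset.mem_filter.mp hc).2.le p (Finset.mem_filter.mpr ⟨hp, hp2⟩)
    q (Finset.mem_filter.mpr ⟨hq, hq2⟩)

lemma singleton_mem_restrict_posLits_iff {Φ : CnfForm V} {T : Finset V} {m : Lit V} :
    {m} ∈ restrict (posPart Φ) (posLits T) ↔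
      m.2 = true ∧ m.1 ∉ T ∧ ∃ c ∈ posPart Φ, m ∈ c ∧ ∀ l ∈ c, l.2 = false → l.1 ∈ T := by
  simp only [restrict, Finset.mem_image, Finset.mem_filter]
  constructor
  · rintro ⟨c, ⟨hc, hcT⟩, hcm⟩
    have hmem (l : Lit V) : l ∈ c ∧ (l.1, !l.2) ∉ posLits T ↔ l = m := by
      rw [← Finset.mem_singleton, ← hcm, Finset.mem_filter]
    obtain ⟨p, hp, hp2⟩ := exists_pos_of_mem_posPart hc
    obtain rfl : p = m := (hmem p).1 ⟨hp, by simp [hp2]⟩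
    refine ⟨hp2, fun hT => hcT p (mem_posLits.2 ⟨hT, hp2⟩) hp, c, hc, hp, fun l hl hl2 => ?_⟩
    by_contra hlT
    obtain rfl := (hmem l).1 ⟨hl, by simp [hl2, hlT]⟩
    simp [hp2] at hl2
  · rintro ⟨hm2, hmT, c, hc, hmc, hneg⟩
    refine ⟨c, ⟨hc, fun l hl hlc => ?_⟩, ?_⟩
    · obtain rfl := eq_of_mem_posPart hc hlc (mem_posLits.1 hl).2 hmc hm2
      exact hmT (mem_posLits.1 hl).1
    · ext l
      simp only [Finset.mem_filter, Finset.mem_singleton, mem_posLits, Bool.not_eq_true']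
      constructor
      · rintro ⟨hlc, hl⟩
        cases hl2 : l.2
        · exact absurd ⟨hneg l hlc hl2, hl2⟩ hl
        · exact eq_of_mem_posPart hc hlc hl2 hmc hm2
      · rintro rfl
        simp [hmc, hm2]


def ImplicationClosed (Φ : CnfForm V) (X : Set V) : Prop :=
  ∀ c ∈ posPart Φ, ∀ p ∈ c, p.2 = true → (∀ l ∈ c, l.2 = false → l.1 ∈ X) → p.1 ∈ X

def propagatedTrue (Φ : CnfForm V) (ρ : Finset V) : Set V :=
  {x | x ∈ ρ ∨ ∃ Ψ : CnfForm V, UPReach (restrict (posPart Φ) (posLits ρ)) Ψ ∧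
    ({(x, true)} : Clause V) ∈ Ψ}

lemma propagatedTrue_subset {Φ : CnfForm V} {ρ : Finset V} {X : Set V}
    (hX : ImplicationClosed Φ X) (hρX : ↑ρ ⊆ X) : propagatedTrue Φ ρ ⊆ X := by
  have unit_mem {T : Finset V} {m : Lit V} (hTX : ↑T ⊆ X)
      (hm : {m} ∈ restrict (posPart Φ) (posLits T)) : m.1 ∈ X ∧ m.2 = true := by
    obtain ⟨hm2, -, c, hc, hmc, hneg⟩ := singleton_mem_restrict_posLits_iff.1 hm
    exact ⟨hX c hc m hmc hm2 fun l hl hl2 => hTX (hneg l hl hl2), hm2⟩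
  have reach {Ψ : CnfForm V} (hΨ : UPReach (restrict (posPart Φ) (posLits ρ)) Ψ) :
      ∃ T : Finset V, ↑T ⊆ X ∧ Ψ = restrict (posPart Φ) (posLits T) := by
    induction hΨ with
    | refl => exact ⟨ρ, hρX, rfl⟩
    | step m _ hm ih =>
      obtain ⟨T, hTX, rfl⟩ := ih
      obtain ⟨hmX, hm2⟩ := unit_mem hTX hm
      obtain ⟨x, b⟩ := m
      obtain rfl : b = true := hm2
      refine ⟨insert x T, ?_, restrict_restrict_posLits _ _ _⟩
      rw [Finset.coe_insert]
      exact Set.insert_subset hmX hTX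
  rintro x (hxρ | ⟨Ψ, hΨ, hx⟩)
  · exact hρX hxρ
  · obtain ⟨T, hTX, rfl⟩ := reach hΨ
    exact (unit_mem hTX hx).1

lemma exists_implicationClosed_subset_propagatedTrue (Φ : CnfForm V) (ρ : Finset V) :
    ∃ T : Finset V, ImplicationClosed Φ ↑T ∧ ρ ⊆ T ∧ ↑T ⊆ propagatedTrue Φ ρ := by
  classical
  let Reachable (T : Finset V) : Prop :=
    UPReach (restrict (posPart Φ) (posLits ρ)) (restrict (posPart Φ) (posLits T)) ∧
      ρ ⊆ T ∧ ↑T ⊆ propagatedTrue Φ ρ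
  have hρ : Reachable ρ := ⟨UPReach.refl _, subset_rfl, fun x hx => Or.inl hx⟩
  -- unit propagation only ever sets variables of `Φ`, so a largest reachable `T` exists
  obtain ⟨T, hT, hmax⟩ := ((ρ ∪ varsOf Φ).powerset.filter Reachable).exists_max_image
    Finset.card ⟨ρ, Finset.mem_filter.2 ⟨Finset.mem_powerset.2 Finset.subset_union_left, hρ⟩⟩
  obtain ⟨hTsub, hreach, hρT, hTprop⟩ := Finset.mem_filter.1 hT
  refine ⟨T, fun c hc p hpc hp2 hneg => ?_, hρT, hTprop⟩
  by_contra hpT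
  have hunit : {p} ∈ restrict (posPart Φ) (posLits T) :=
    singleton_mem_restrict_posLits_iff.2 ⟨hp2, hpT, c, hc, hpc, hneg⟩
  obtain ⟨x, b⟩ := p
  obtain rfl : b = true := hp2
  have hxT : Reachable (insert x T) := by
    refine ⟨?_, hρT.trans (Finset.subset_insert _ _), ?_⟩
    · rw [← restrict_restrict_posLits]
      exact UPReach.step _ hreach hunit
    · rw [Finset.coe_insert]
      exact Set.insert_subset (Or.inr ⟨_, hreach, hunit⟩) hTprop
  have hxvars : x ∈ varsOf Φ := fst_mem_varsOf (Finset.mem_filter.1 hc).1 hpc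
  have := hmax (insert x T) <| Finset.mem_filter.2 ⟨Finset.mem_powerset.2 <|
    Finset.insert_subset (Finset.mem_union_right _ hxvars) (Finset.mem_powerset.1 hTsub), hxT⟩
  rw [Finset.card_insert_of_notMem hpT] at this
  omega

lemma implicationClosed_propagatedTrue (Φ : CnfForm V) (ρ : Finset V) :
    ImplicationClosed Φ (propagatedTrue Φ ρ) := by
  obtain ⟨T, hT, hρT, hTprop⟩ := exists_implicationClosed_subset_propagatedTrue Φ ρ
  rwa [(propagatedTrue_subset hT (Finset.coe_subset.2 hρT)).antisymm hTprop]

def Satisfies (ν : V → Bool) (Φ : CnfForm V) : Prop := ∀ c ∈ Φ, ∃ l ∈ c, ν l.1 = l.2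

lemma satisfies_of_implicationClosed {Φ : CnfForm V} {X : Set V} {ν : V → Bool}
    (hHorn : IsHorn Φ) (hX : ImplicationClosed Φ X)
    (hno : ¬ ∃ c ∈ negClauses Φ, ∀ l ∈ c, l.1 ∈ X) (hνX : ∀ x ∈ X, ν x = true)
    (hνout : ∀ x ∈ varsOf Φ, x ∉ X → ν x = false) : Satisfies ν Φ := by
  intro c hc
  by_contra! hsat
  have hneg (l : Lit V) (hl : l ∈ c) (hl2 : l.2 = false) : l.1 ∈ X := by
    by_contra hlX
    exact hsat l hl (by rw [hνout _ (fst_mem_varsOf hc hl) hlX, hl2])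
  by_cases hpos : ∃ p ∈ c, p.2 = true
  · obtain ⟨p, hpc, hp2⟩ := hpos
    have hcP : c ∈ posPart Φ := Finset.mem_filter.2 ⟨hc, le_antisymm (hHorn c hc)
      (Finset.card_pos.2 ⟨p, Finset.mem_filter.2 ⟨hpc, hp2⟩⟩)⟩
    exact hsat p hpc (by rw [hνX _ (hX c hcP p hpc hp2 hneg), hp2])
  · simp only [not_exists, not_and, Bool.not_eq_true] at hpos
    exact hno ⟨c, Finset.mem_filter.2 ⟨hc, hpos⟩, fun l hl => hneg l hl (hpos l hl)⟩

lemma Satisfies.restrict {ν : V → Bool} {Φ : CnfForm V} {A : Finset (Lit V)}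
    (hν : Satisfies ν Φ) (hA : ∀ l ∈ A, ν l.1 = l.2) : Satisfies ν (restrict Φ A) := by
  intro c' hc'
  simp only [_root_.restrict, Finset.mem_image, Finset.mem_filter] at hc'
  obtain ⟨c, ⟨hc, -⟩, rfl⟩ := hc'
  obtain ⟨l, hl, hνl⟩ := hν c hc
  refine ⟨l, Finset.mem_filter.2 ⟨hl, fun hlA => ?_⟩, hνl⟩
  simpa [hνl] using hA _ hlA

theorem stmt2_general {V : Type} [DecidableEq V] (Φ : CnfForm V) (ρ : Finset V)
    (hHorn : IsHorn Φ) (S : Set V)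
    (hS : ∀ x : V, x ∈ S ↔ (x ∈ ρ ∨
      ∃ Ψ : CnfForm V, UPReach (restrict (posPart Φ) (ρ.image fun v => (v, true))) Ψ ∧
        ({((x, true) : Lit V)} : Clause V) ∈ Ψ))
    (hno : ¬ ∃ c ∈ negClauses Φ, ∀ l ∈ c, l.1 ∈ S)
    (ν : V → Bool) (hνS : ∀ x ∈ S, ν x = true)
    (hνout : ∀ x ∈ varsOf Φ, x ∉ S → ν x = false) :
    (∀ c ∈ Φ, ∃ l ∈ c, ν l.1 = l.2) ∧
      ∃ μ : V → Bool, ∀ c ∈ restrict Φ (ρ.image fun v => (v, true)), ∃ l ∈ c, μ l.1 = l.2 := by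
  obtain rfl : S = propagatedTrue Φ ρ := Set.ext hS
  have hν : Satisfies ν Φ :=
    satisfies_of_implicationClosed hHorn (implicationClosed_propagatedTrue Φ ρ) hno hνS hνout
  refine ⟨hν, ν, hν.restrict fun l hl => ?_⟩
  obtain ⟨v, hv, rfl⟩ := Finset.mem_image.1 hl
  exact hνS v (Or.inl hv)

/-- Let `Φ` be Horn, `ρ ⊆ V_Φ` a set of variables assigned true, and
`S ⊇ ρ` the set of variables set to true by unit propagation from `Φ⁺|_ρ` together
with `ρ`.  If no negative clause of `Φ` has all its variables in `S`, then the
complete interpretation assigning true exactly on `S` (false on `V_Φ \ S`) is a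
model of `Φ`; in particular `Φ|_ρ` is satisfiable. -/
theorem stmt2 {V : Type} [DecidableEq V] (Φ : CnfForm V) (ρ : Finset V)
    (hHorn : IsHorn Φ) (hρ : ρ ⊆ varsOf Φ) (S : Set V)
    (hS : ∀ x : V, x ∈ S ↔ (x ∈ ρ ∨
      ∃ Ψ : CnfForm V, UPReach (restrict (posPart Φ) (ρ.image fun v => (v, true))) Ψ ∧
        ({((x, true) : Lit V)} : Clause V) ∈ Ψ))
    (hno : ¬ ∃ c ∈ negClauses Φ, ∀ l ∈ c, l.1 ∈ S)
    (ν : V → Bool) (hνS : ∀ x ∈ S, ν x = true)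
    (hνout : ∀ x ∈ varsOf Φ, x ∉ S → ν x = false) :
    (∀ c ∈ Φ, ∃ l ∈ c, ν l.1 = l.2) ∧
      ∃ μ : V → Bool, ∀ c ∈ restrict Φ (ρ.image fun v => (v, true)), ∃ l ∈ c, μ l.1 = l.2 :=
  stmt2_general Φ ρ hHorn S hS hno ν hνS hνout
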